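/- arXiv:1702.01345 — 2 statements merged into one kernel-verified Lean document; each statement's English description precedes it below -/
import Mathlib

section
/- Let R be a commutative ring and A a commutative R-algebra. If dim_e^A(R) = 0, then dim(A) = f-dim_R(A). -/
open TensorProduct

noncomputable section

/-- The residue field `κ(p)` of a commutative ring `R` at a prime ideal `p`, realised as the
residue field of the localization of `R` at `p`; it is an `R`-algebra. -/
abbrev Kappa (R : Type*) [CommRing R] (p : Ideal R) [p.IsPrime] : Type _ :=
  IsLocalRing.ResidueField (Localization.AtPrime p)

/-- The fibre ring `κ(p) ⊗_R A` of an `R`-algebra `A` at a prime ideal `p` of `R`. -/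
abbrev FiberRing (R A : Type*) [CommRing R] [CommRing A] [Algebra R A]
    (p : Ideal R) [p.IsPrime] : Type _ :=
  (Kappa R p) ⊗[R] A

/-- A prime `p` of `R` is *effective* with respect to the `R`-algebra `A` if the fibre ring
`κ(p) ⊗_R A` is nonzero. -/
def IsEffective (R A : Type*) [CommRing R] [CommRing A] [Algebra R A]
    (p : PrimeSpectrum R) : Prop :=
  Nontrivial (FiberRing R A p.asIdeal)

/-- `dim_p(A) := dim (κ(p) ⊗_R A)`, the Krull dimension of the fibre ring of `A` at `p`. -/
def fiberDim (R A : Type*) [CommRing R] [CommRing A] [Algebra R A]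
    (p : Ideal R) [p.IsPrime] : WithBot ℕ∞ :=
  ringKrullDim (FiberRing R A p)

/-- `f-dim_R(A) := sup {dim_p(A) : p ∈ Spec_e^A(R)}`, the fibre Krull dimension of `A` over `R`. -/
def fdim (R A : Type*) [CommRing R] [CommRing A] [Algebra R A] : WithBot ℕ∞ :=
  ⨆ p : {p : PrimeSpectrum R // IsEffective R A p}, fiberDim R A p.1.asIdeal

/-- `dim_e^A(R)`, the effective Krull dimension of `R` with respect to `A`: the supremum of
lengths of chains of primes of `R` consisting of effective primes with respect to `A`. -/
def edim (R A : Type*) [CommRing R] [CommRing A] [Algebra R A] : WithBot ℕ∞ :=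
  Order.krullDim {p : PrimeSpectrum R // IsEffective R A p}

/-- A ring homomorphism `f : R → A` satisfies the Going-Down property if for any primes
`p ⊆ q` of `R` and any prime `Q` of `A` with `f⁻¹(Q) = q` there is a prime `P ⊆ Q` of `A`
with `f⁻¹(P) = p`. -/
def SatisfiesGoingDown {R A : Type*} [CommRing R] [CommRing A] (f : R →+* A) : Prop :=
  ∀ p q : Ideal R, p.IsPrime → q.IsPrime → p ≤ q →
    ∀ Q : Ideal A, Q.IsPrime → Q.comap f = q →
      ∃ P : Ideal A, P.IsPrime ∧ P ≤ Q ∧ P.comap f = p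

/-- The transcendence degree (as an extended natural number) of an algebra `L` over `K`:
the supremum of the cardinalities of finite algebraically independent subsets of `L`. -/
def algTrdeg (K L : Type*) [CommRing K] [CommRing L] [Algebra K L] : ℕ∞ :=
  ⨆ s : {s : Finset L // AlgebraicIndependent K (Subtype.val : {x : L // x ∈ s} → L)},
    (s.1.card : ℕ∞)

/-- Transcendence degree along a ring homomorphism. -/
def rhTrdeg {K L : Type*} [CommRing K] [CommRing L] (f : K →+* L) : ℕ∞ :=
  @algTrdeg K L _ _ f.toAlgebra

/-- `t.d.(C : k)`: the supremum, over the primes `q` of `C`, of the transcendence degree of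
`Frac(C/q)` over `k`. -/
def tdRing (k C : Type*) [CommRing k] [CommRing C] [Algebra k C] : ℕ∞ :=
  ⨆ q : PrimeSpectrum C, algTrdeg k (FractionRing (C ⧸ q.asIdeal))

/-- `t.d._p(C : R) := t.d.(κ(p) ⊗_R C : κ(p))`, the transcendence degree of `C` over `R`
at the prime `p`. -/
def tdLocal (R C : Type*) [CommRing R] [CommRing C] [Algebra R C]
    (p : Ideal R) [p.IsPrime] : ℕ∞ :=
  tdRing (Kappa R p) (FiberRing R C p)

/-- `Spec_p(A)`: the primes of `A` contracting to `p` over `R`. -/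
abbrev SpecAt (R A : Type*) [CommRing R] [CommRing A] [Algebra R A] (p : Ideal R) : Type _ :=
  {P : PrimeSpectrum A // P.asIdeal.comap (algebraMap R A) = p}

/-- `ht_p(P)`: the supremum of lengths of chains of primes of `A` contracting to `p`
and ending at `P`. -/
def htLocal (R : Type*) {A : Type*} [CommRing R] [CommRing A] [Algebra R A] {p : Ideal R}
    (P : SpecAt R A p) : ℕ∞ :=
  Order.height P

/-- A `k`-algebra `C` over a field `k` is an AF-ring if
`ht(Q) + t.d.(C/Q : k) = t.d.(C_Q : k)` for every prime `Q` of `C`. -/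
def IsAFRing (k C : Type*) [Field k] [CommRing C] [Algebra k C] : Prop :=
  ∀ Q : PrimeSpectrum C,
    Order.height Q + tdRing k (C ⧸ Q.asIdeal) = tdRing k (Localization.AtPrime Q.asIdeal)

/-- `A` is a fibred AF-ring at a prime `p` of `R`: the fibre ring `κ(p) ⊗_R A` is nonzero
and is an AF-ring over `κ(p)`. -/
def IsFibredAFRingAt (R A : Type*) [CommRing R] [CommRing A] [Algebra R A]
    (p : PrimeSpectrum R) : Prop :=
  Nontrivial (FiberRing R A p.asIdeal) ∧
    IsAFRing (Kappa R p.asIdeal) (FiberRing R A p.asIdeal)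

/-- `A` is a fibred AF-ring over `R`: every nonzero fibre ring `κ(p) ⊗_R A` is an AF-ring
over `κ(p)`. -/
def IsFibredAFRing (R A : Type*) [CommRing R] [CommRing A] [Algebra R A] : Prop :=
  ∀ p : PrimeSpectrum R, Nontrivial (FiberRing R A p.asIdeal) →
    IsAFRing (Kappa R p.asIdeal) (FiberRing R A p.asIdeal)

/-- The extension `Q[n] = Q·C[X₁,…,Xₙ]` of a prime `Q` of `C` to the polynomial ring
in `n` indeterminates; it is again prime. -/
def polyExt {C : Type*} [CommRing C] (n : ℕ) (Q : PrimeSpectrum C) :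
    PrimeSpectrum (MvPolynomial (Fin n) C) :=
  ⟨Q.asIdeal.map MvPolynomial.C, by
    have h : RingHom.ker (MvPolynomial.map (σ := Fin n) (Ideal.Quotient.mk Q.asIdeal)) =
        Q.asIdeal.map MvPolynomial.C := by
      rw [MvPolynomial.ker_map, Ideal.mk_ker]
    rw [← h]
    exact RingHom.ker_isPrime _⟩

/-- `ht(Q[s])` for `s : ℕ∞`: for finite `s = n` it is the height of `Q[n]`, and for
`s = ⊤` it is the supremum over all finite `n` of the heights of the `Q[n]`. -/
def polyExtHeight {C : Type*} [CommRing C] (Q : PrimeSpectrum C) (s : ℕ∞) : ℕ∞ :=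
  WithTop.recTopCoe (⨆ n : ℕ, Order.height (polyExt n Q))
    (fun n => Order.height (polyExt n Q)) s

/-- Wadsworth's invariant
`D(s, d, C) := sup {ht(Q[s]) + min(s, d + t.d.(C/Q : k)) : Q ∈ Spec C}`. -/
def Dinv (k C : Type*) [Field k] [CommRing C] [Algebra k C] (s d : ℕ∞) : ℕ∞ :=
  ⨆ Q : PrimeSpectrum C, polyExtHeight Q s + min s (d + tdRing k (C ⧸ Q.asIdeal))

/-- `D_p(s, d, B) := D(s, d, κ(p) ⊗_R B)`. -/
def DLocal (R B : Type*) [CommRing R] [CommRing B] [Algebra R B]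
    (p : Ideal R) [p.IsPrime] (s d : ℕ∞) : ℕ∞ :=
  Dinv (Kappa R p) (FiberRing R B p) s d


/-! The map `Spec A → Spec R` lands in the effective primes, and these form a poset of
dimension `0`; hence a monotone map sends every chain of primes of `A` to a single point, i.e.
every chain lies in one fibre of `Spec A → Spec R`. The fibre over `p` is order-isomorphic to
`Spec (κ(p) ⊗_R A)`, so `dim A` is the supremum of the fibre dimensions. -/

namespace Order

theorem krullDim_eq_iSup_krullDim_preimage_of_krullDim_nonpos {α β : Type*} [Preorder α]
    [PartialOrder β] (f : α → β) (hf : Monotone f) (hβ : krullDim β ≤ 0) :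
    krullDim α = ⨆ b, krullDim (f ⁻¹' {b}) := by
  refine le_antisymm (iSup_le fun l => ?_)
    (iSup_le fun b => krullDim_le_of_strictMono _ (Subtype.strictMono_coe _))
  have hconst : ∀ i, f (l i) = f l.head := fun i =>
    have hle := hf (l.monotone (Fin.zero_le i))
    ((krullDim_nonpos_iff_forall_isMin.mp hβ) _ hle).antisymm hle
  let l' : LTSeries (f ⁻¹' {f l.head}) := ⟨l.length, fun i => ⟨l i, hconst i⟩, l.step⟩
  exact (LTSeries.length_le_krullDim l').trans (le_iSup_of_le (f l.head) le_rfl)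

end Order

section

variable (R A : Type*) [CommRing R] [CommRing A] [Algebra R A]

theorem fiberDim_eq_krullDim_preimage (p : PrimeSpectrum R) :
    fiberDim R A p.asIdeal = Order.krullDim (PrimeSpectrum.comap (algebraMap R A) ⁻¹' {p}) :=
  (Order.krullDim_eq_of_orderIso (PrimeSpectrum.preimageOrderIsoFiber R A p)).symm

variable {R A} in
theorem isEffective_comap (P : PrimeSpectrum A) :
    IsEffective R A (PrimeSpectrum.comap (algebraMap R A) P) :=
  PrimeSpectrum.nonempty_iff_nontrivial.mp ⟨PrimeSpectrum.preimageEquivFiber R A _ ⟨P, rfl⟩⟩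

def effectiveComap (P : PrimeSpectrum A) : {p : PrimeSpectrum R // IsEffective R A p} :=
  ⟨PrimeSpectrum.comap (algebraMap R A) P, isEffective_comap P⟩

theorem monotone_effectiveComap : Monotone (effectiveComap R A) :=
  fun _ _ h => Ideal.comap_mono h

theorem effectiveComap_preimage_singleton (p : {p : PrimeSpectrum R // IsEffective R A p}) :
    effectiveComap R A ⁻¹' {p} = PrimeSpectrum.comap (algebraMap R A) ⁻¹' {p.1} :=
  Set.ext fun _ => Subtype.ext_iff

end

/-- If `dim_e^A(R) = 0` then `dim A = f-dim_R(A)`. -/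
theorem stmt_2 (R A : Type*) [CommRing R] [CommRing A] [Algebra R A]
    (h : edim R A = 0) :
    ringKrullDim A = fdim R A := by
  rw [ringKrullDim, Order.krullDim_eq_iSup_krullDim_preimage_of_krullDim_nonpos _
    (monotone_effectiveComap R A) h.le]
  simp only [fdim, fiberDim_eq_krullDim_preimage]
  exact iSup_congr fun p => by rw [effectiveComap_preimage_singleton]
end
end

section
/- Let R be a commutative ring and A a commutative R-algebra such that the structure map f_A : R → A satisfies the Going-Down property. Assume that f-dim_R(A) = dim_m(A) for every m ∈ Max_e^A(R), the set of maximal elements of Spec_e^A(R). Then f-dim_R(A) + dim_e^A(R) ≤ dim(A) ≤ f-dim_R(A) + (1 + f-dim_R(A)) · dim_e^A(R). -/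
/-!
Everything is a statement about the monotone map `φ : Spec A → Spec R` of posets: its image is
the set of effective primes and its fibres are the spectra of the fibre rings.

The upper bound holds for any monotone map: along a chain of `Spec A` the image in `Spec R` takes
at most `dim_e + 1` values, and the primes with a given image form a chain in one fibre, so
there are at most `(1 + f-dim)(1 + dim_e)` of them.

For the lower bound, going-down lifts every chain of primes of `R` ending at `φ P` to a chain of
`Spec A` of the same length ending at `P`. Take an effective prime `m` that is maximal among the
effective primes and of height `dim_e` (it exists when `dim_e` is finite; when it is infinite the
lifted chains already make `dim A` infinite). Lifting a chain of length `dim_e` ending at `m` to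
the bottom of a chain of length `n` in the fibre over `m` gives a chain of length `n + dim_e` in
`Spec A`, and `n` ranges up to `dim_m(A) = f-dim`.
-/

open TensorProduct

noncomputable section

/-- The Krull dimension of a commutative ring, as an element of `WithBot ℕ∞`
(definitionally equal to `ringKrullDim`). -/
def ringDim (A : Type*) [CommRing A] : WithBot ℕ∞ :=
  ringKrullDim A


section KrullDim

variable {α β : Type*}

theorem Order.height_head_add_length_le_height_last [Preorder α] (c : LTSeries α) :
    Order.height c.head + c.length ≤ Order.height c.last := by
  induction c using RelSeries.inductionOn with
  | singleton a => simp
  | cons c a hac ih =>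
    rw [RelSeries.head_cons, RelSeries.cons_length, RelSeries.last_cons]
    calc Order.height a + (c.length + 1 : ℕ)
        = Order.height a + 1 + c.length := by push_cast; ring
      _ ≤ Order.height c.head + c.length := by gcongr; exact Order.height_add_one_le hac
      _ ≤ Order.height c.last := ih

theorem Order.exists_isMax_height_eq_krullDim [Preorder α] [FiniteDimensionalOrder α] :
    ∃ x : α, IsMax x ∧ (Order.height x : WithBot ℕ∞) = Order.krullDim α := by
  have hx := LTSeries.height_last_longestOf (α := α)
  refine ⟨_, isMax_iff_forall_not_lt.mpr fun y hxy => ?_, hx⟩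
  have hfin : Order.height (LTSeries.longestOf α).last ≠ ⊤ := fun h =>
    Order.krullDim_ne_top_of_finiteDimensionalOrder (h ▸ hx).symm
  have hy : Order.height y ≤ Order.height (LTSeries.longestOf α).last :=
    WithBot.coe_le_coe.mp (hx ▸ Order.height_le_krullDim y)
  exact lt_irrefl _ ((ENat.add_one_le_iff hfin).mp ((Order.height_add_one_le hxy).trans hy))

theorem Order.krullDim_le_add_mul_krullDim_range [Preorder α] [PartialOrder β] {φ : α → β}
    (hφ : Monotone φ) {d : WithBot ℕ∞} (hd : ∀ b, Order.krullDim (φ ⁻¹' {b}) ≤ d) :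
    Order.krullDim α ≤ d + (1 + d) * Order.krullDim (Set.range φ) := by
  rcases isEmpty_or_nonempty α with hα | ⟨⟨a⟩⟩
  · simp [Order.krullDim_eq_bot]
  have hrange : (0 : WithBot ℕ∞) ≤ Order.krullDim (Set.range φ) :=
    @Order.krullDim_nonneg _ _ ⟨⟨φ a, a, rfl⟩⟩
  have hd0 : (0 : WithBot ℕ∞) ≤ d := (@Order.krullDim_nonneg _ _ ⟨⟨a, rfl⟩⟩).trans (hd (φ a))
  obtain ⟨e, rfl⟩ := WithBot.ne_bot_iff_exists.mp (ne_bot_of_le_ne_bot WithBot.coe_ne_bot hd0)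
  induction e using ENat.recTopCoe with
  | top =>
    obtain ⟨k, hk⟩ := WithBot.ne_bot_iff_exists.mp (ne_bot_of_le_ne_bot WithBot.coe_ne_bot hrange)
    rw [← hk]
    norm_cast
    simp
  | coe m =>
    have hfib (x : Set.range φ) : Set.rangeFactorization φ ⁻¹' {x} = φ ⁻¹' {(x : β)} := by
      ext a
      simp [Set.rangeFactorization, Subtype.ext_iff]
    calc Order.krullDim α ≤ (m + 1) * Order.krullDim (Set.range φ) + m :=
          Order.krullDim_le_of_krullDim_preimage_le' (Set.rangeFactorization φ)
            (fun _ _ h => hφ h) fun x => hfib x ▸ hd x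
      _ = _ := by push_cast; ring

end KrullDim

def HasGoingDown {α β : Type*} [LE α] [LE β] (φ : α → β) : Prop :=
  ∀ ⦃a : α⦄ ⦃b : β⦄, b ≤ φ a → ∃ a' ≤ a, φ a' = b

namespace HasGoingDown

variable {α β : Type*} [PartialOrder α] [Preorder β] {φ : α → β}

theorem exists_ltSeries_length_eq_last_eq (hφ : HasGoingDown φ) (l : LTSeries β) {a : α}
    (ha : φ a = l.last) : ∃ L : LTSeries α, L.length = l.length ∧ L.last = a := by
  induction l using RelSeries.inductionOn' generalizing a with
  | singleton b => exact ⟨RelSeries.singleton _ a, rfl, rfl⟩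
  | snoc l b hlb ih =>
    rw [RelSeries.last_snoc] at ha
    obtain ⟨a', ha'a, ha'⟩ := hφ (ha ▸ le_of_lt hlb)
    obtain ⟨L, hlen, hlast⟩ := ih ha'
    have hlt : a' < a := lt_of_le_of_ne ha'a fun h => ne_of_lt hlb (ha' ▸ h ▸ ha)
    exact ⟨L.snoc a (hlast ▸ hlt), by simp [hlen], by simp⟩

theorem height_le_height (hφ : HasGoingDown φ) (a : α) : Order.height (φ a) ≤ Order.height a :=
  Order.height_le fun l hl => by
    obtain ⟨L, hlen, hlast⟩ := hφ.exists_ltSeries_length_eq_last_eq l hl.symm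
    exact hlen ▸ hlast ▸ Order.length_le_height_last

theorem height_add_krullDim_preimage_le (hφ : HasGoingDown φ) (b : β) :
    Order.height b + Order.krullDim (φ ⁻¹' {b}) ≤ Order.krullDim α := by
  rcases isEmpty_or_nonempty (φ ⁻¹' {b}) with hempty | hne
  · simp [Order.krullDim_eq_bot]
  have : Nonempty α := hne.map Subtype.val
  rw [Order.krullDim_eq_iSup_length, ← WithBot.coe_add, ENat.add_iSup,
    Order.krullDim_eq_iSup_height_of_nonempty, WithBot.coe_le_coe]
  refine iSup_le fun c => ?_
  let c' := c.map Subtype.val (Subtype.strictMono_coe _)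
  have hb : φ c'.head = b := c.head.2
  calc Order.height b + c.length = Order.height (φ c'.head) + c'.length := by rw [hb]; rfl
    _ ≤ Order.height c'.head + c'.length := by gcongr; exact hφ.height_le_height _
    _ ≤ Order.height c'.last := Order.height_head_add_length_le_height_last c'
    _ ≤ ⨆ x, Order.height x := le_iSup _ _

theorem krullDim_range_le (hφ : HasGoingDown φ) :
    Order.krullDim (Set.range φ) ≤ Order.krullDim α := by
  rw [Order.krullDim_eq_iSup_height]
  refine iSup_le fun ⟨b, a, hab⟩ => ?_
  calc (Order.height (⟨b, a, hab⟩ : Set.range φ) : WithBot ℕ∞)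
      ≤ Order.height b := WithBot.coe_le_coe.mpr
        (Order.height_le_height_apply_of_strictMono _ (Subtype.strictMono_coe _) _)
    _ ≤ Order.height a := WithBot.coe_le_coe.mpr (hab ▸ hφ.height_le_height a)
    _ ≤ Order.krullDim α := Order.height_le_krullDim a

theorem add_krullDim_range_le (hφ : HasGoingDown φ) {d : WithBot ℕ∞}
    (hd : ∀ b : Set.range φ, IsMax b → Order.krullDim (φ ⁻¹' {(b : β)}) = d) :
    d + Order.krullDim (Set.range φ) ≤ Order.krullDim α := by
  rcases isEmpty_or_nonempty (Set.range φ) with hempty | hne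
  · simp [Order.krullDim_eq_bot]
  rcases finiteDimensionalOrder_or_infiniteDimensionalOrder (Set.range φ) with hfin | hinf
  · obtain ⟨b, hmax, hb⟩ := Order.exists_isMax_height_eq_krullDim (α := Set.range φ)
    rw [← hd b hmax, ← hb, add_comm]
    calc (Order.height b : WithBot ℕ∞) + Order.krullDim (φ ⁻¹' {(b : β)})
        ≤ Order.height (b : β) + Order.krullDim (φ ⁻¹' {(b : β)}) := by
          gcongr
          exact WithBot.coe_le_coe.mpr
            (Order.height_le_height_apply_of_strictMono _ (Subtype.strictMono_coe _) b)
      _ ≤ Order.krullDim α := hφ.height_add_krullDim_preimage_le b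
  · have h := hφ.krullDim_range_le
    rw [Order.krullDim_eq_top, top_le_iff] at h
    exact h ▸ le_top

end HasGoingDown

theorem SatisfiesGoingDown.hasGoingDown_comap {R A : Type*} [CommRing R] [CommRing A]
    {f : R →+* A} (hf : SatisfiesGoingDown f) : HasGoingDown (PrimeSpectrum.comap f) := by
  intro P p hp
  obtain ⟨P', hP', hle, hc⟩ := hf p.asIdeal (PrimeSpectrum.comap f P).asIdeal p.isPrime
    inferInstance hp P.asIdeal P.isPrime rfl
  exact ⟨⟨P', hP'⟩, hle, PrimeSpectrum.ext hc⟩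

section Fibres

variable (R A : Type*) [CommRing R] [CommRing A] [Algebra R A]

theorem krullDim_preimage_comap_eq_fiberDim (p : PrimeSpectrum R) :
    Order.krullDim (PrimeSpectrum.comap (algebraMap R A) ⁻¹' {p}) = fiberDim R A p.asIdeal :=
  Order.krullDim_eq_of_orderIso (PrimeSpectrum.preimageOrderIsoFiber R A p)

theorem isEffective_iff_mem_range_comap (p : PrimeSpectrum R) :
    IsEffective R A p ↔ p ∈ Set.range (PrimeSpectrum.comap (algebraMap R A)) := by
  rw [IsEffective, ← PrimeSpectrum.nonempty_iff_nontrivial,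
    ← (PrimeSpectrum.preimageOrderIsoFiber R A p).toEquiv.nonempty_congr, Set.nonempty_coe_sort,
    Set.preimage_singleton_nonempty]

theorem edim_eq_krullDim_range_comap :
    edim R A = Order.krullDim (Set.range (PrimeSpectrum.comap (algebraMap R A))) :=
  Order.krullDim_eq_of_orderIso
    (OrderIso.setCongr _ _ (Set.ext (isEffective_iff_mem_range_comap R A)))

theorem krullDim_preimage_comap_le_fdim (p : PrimeSpectrum R) :
    Order.krullDim (PrimeSpectrum.comap (algebraMap R A) ⁻¹' {p}) ≤ fdim R A := by
  by_cases hp : IsEffective R A p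
  · rw [krullDim_preimage_comap_eq_fiberDim]
    exact le_iSup (fun q : {q // IsEffective R A q} => fiberDim R A q.1.asIdeal) ⟨p, hp⟩
  · rw [isEffective_iff_mem_range_comap, ← Set.preimage_singleton_nonempty,
      Set.not_nonempty_iff_eq_empty] at hp
    rw [hp, Order.krullDim_eq_bot]
    exact bot_le

end Fibres

/-- If `R → A` satisfies Going-Down and `f-dim_R(A) = dim_m(A)` for every
maximal effective prime `m` of `R` with respect to `A`, then
`f-dim_R(A) + dim_e^A(R) ≤ dim A ≤ f-dim_R(A) + (1 + f-dim_R(A)) · dim_e^A(R)`. -/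
theorem stmt_3 (R A : Type*) [CommRing R] [CommRing A] [Algebra R A]
    (hGD : SatisfiesGoingDown (algebraMap R A))
    (hmax : ∀ m : PrimeSpectrum R, IsEffective R A m →
      (∀ q : PrimeSpectrum R, IsEffective R A q → m ≤ q → q = m) →
      fdim R A = fiberDim R A m.asIdeal) :
    fdim R A + edim R A ≤ ringDim A ∧
      ringDim A ≤ fdim R A + (1 + fdim R A) * edim R A := by
  rw [edim_eq_krullDim_range_comap]
  refine ⟨hGD.hasGoingDown_comap.add_krullDim_range_le fun m hm => ?_,
    Order.krullDim_le_add_mul_krullDim_range (φ := PrimeSpectrum.comap (algebraMap R A))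
      (fun _ _ h => Ideal.comap_mono h) (krullDim_preimage_comap_le_fdim R A)⟩
  rw [krullDim_preimage_comap_eq_fiberDim]
  refine (hmax m ((isEffective_iff_mem_range_comap R A m).mpr m.2) fun q hq hmq => ?_).symm
  exact le_antisymm (hm (b := ⟨q, (isEffective_iff_mem_range_comap R A q).mp hq⟩) hmq) hmq
end
end
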